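/- arXiv:1502.04606 — 8 statements merged into one kernel-verified Lean document; each statement's English description precedes it below -/
import Mathlib

section
/- For all real a > 0, b > 0 and t ≥ 0, γ(a,t) · Γ(b) = 2 ∫₀^{π/2} γ(a+b, t sec²θ) · cos^{2a-1}(θ) · sin^{2b-1}(θ) dθ. -/
open Real MeasureTheory Set

/-- Lower incomplete gamma function `γ(s,x) = ∫₀ˣ u^(s-1) e^(-u) du`. -/
noncomputable def lowerGamma (s x : ℝ) : ℝ := ∫ u in (0:ℝ)..x, u ^ (s - 1) * Real.exp (-u)

/-- Error function `erf x = (2/√π) ∫₀ˣ e^(-u²) du`. -/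
noncomputable def erf (x : ℝ) : ℝ := (2 / Real.sqrt π) * ∫ u in (0:ℝ)..x, Real.exp (-u ^ 2)

/-- Complementary error function. -/
noncomputable def erfc (x : ℝ) : ℝ := 1 - erf x

/-!
Substituting `x = tan θ` turns the right-hand side into
`2 ∫₀^∞ x^(2b-1) (1+x²)^(-(a+b)) γ(a+b, t(1+x²)) dx`, and rescaling the variable of the
incomplete gamma function gives
`(1+x²)^(-(a+b)) γ(a+b, t(1+x²)) = ∫₀^t u^(a+b-1) e^(-(1+x²)u) du`.
After exchanging the two integrals, the `x`-integral is the Gaussian moment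
`∫₀^∞ x^(2b-1) e^(-u x²) dx = u^(-b) Γ(b) / 2`,
which leaves `Γ(b)/2 · ∫₀^t u^(a-1) e^(-u) du`.
-/

lemma cos_pos_of_mem_Ioo_zero_pi_div_two {θ : ℝ} (hθ : θ ∈ Ioo 0 (π / 2)) : 0 < cos θ :=
  cos_pos_of_mem_Ioo ⟨by linarith [hθ.1, pi_pos], hθ.2⟩

lemma tan_image_Ioo_zero_pi_div_two : tan '' Ioo 0 (π / 2) = Ioi 0 := by
  ext x
  constructor
  · rintro ⟨θ, hθ, rfl⟩
    exact tan_pos_of_pos_of_lt_pi_div_two hθ.1 hθ.2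
  · intro hx
    refine ⟨arctan x, ⟨?_, arctan_lt_pi_div_two x⟩, tan_arctan x⟩
    simpa using arctan_strictMono hx

theorem integral_comp_tan_div_cos_sq (f : ℝ → ℝ) :
    ∫ θ in Ioo 0 (π / 2), f (tan θ) / cos θ ^ 2 = ∫ x in Ioi 0, f x := by
  have hderiv : ∀ θ ∈ Ioo 0 (π / 2), HasDerivWithinAt tan (1 / cos θ ^ 2) (Ioo 0 (π / 2)) θ :=
    fun θ hθ => (hasDerivAt_tan (cos_pos_of_mem_Ioo_zero_pi_div_two hθ).ne').hasDerivWithinAt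
  have hinj : InjOn tan (Ioo 0 (π / 2)) :=
    injOn_tan.mono (Ioo_subset_Ioo (by linarith [pi_pos]) le_rfl)
  rw [← tan_image_Ioo_zero_pi_div_two,
    integral_image_eq_integral_abs_deriv_smul measurableSet_Ioo hderiv hinj]
  refine setIntegral_congr_fun measurableSet_Ioo fun θ hθ => ?_
  rw [abs_of_pos (by have := cos_pos_of_mem_Ioo_zero_pi_div_two hθ; positivity), smul_eq_mul,
    one_div_mul_eq_div]

theorem lowerGamma_eq_integral_Ioc (s : ℝ) {t : ℝ} (ht : 0 ≤ t) :
    lowerGamma s t = ∫ u in Ioc 0 t, u ^ (s - 1) * exp (-u) :=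
  intervalIntegral.integral_of_le ht

theorem lowerGamma_const_mul (s : ℝ) {c t : ℝ} (hc : 0 < c) (ht : 0 ≤ t) :
    lowerGamma s (c * t) = c ^ s * ∫ u in Ioc 0 t, u ^ (s - 1) * exp (-(c * u)) := by
  have hsub := intervalIntegral.integral_comp_mul_left
    (fun v => v ^ (s - 1) * exp (-v)) hc.ne' (a := 0) (b := t)
  rw [mul_zero, eq_inv_smul_iff₀ hc.ne', smul_eq_mul] at hsub
  rw [lowerGamma, ← hsub, intervalIntegral.integral_of_le ht, ← integral_const_mul,
    ← integral_const_mul]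
  refine setIntegral_congr_fun measurableSet_Ioc fun u hu => ?_
  rw [mul_rpow hc.le hu.1.le, rpow_sub_one hc.ne']
  field_simp

theorem integral_rpow_mul_exp_neg_mul_sq_Ioi {s u : ℝ} (hs : 0 < s) (hu : 0 < u) :
    ∫ x in Ioi 0, x ^ (2 * s - 1) * exp (-u * x ^ 2) = u ^ (-s) * Gamma s / 2 := by
  have h := integral_rpow_mul_exp_neg_mul_rpow two_pos (by linarith : -1 < 2 * s - 1) hu
  simp only [rpow_two, sub_add_cancel] at h
  rw [h, mul_div_cancel_left₀ _ two_ne_zero, neg_div, mul_div_cancel_left₀ _ two_ne_zero]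
  ring

lemma rpow_mul_exp_neg_one_add_sq_mul (a b u x : ℝ) :
    x ^ (2 * b - 1) * (u ^ (a + b - 1) * exp (-((1 + x ^ 2) * u)))
      = u ^ (a + b - 1) * exp (-u) * (x ^ (2 * b - 1) * exp (-u * x ^ 2)) := by
  rw [show -((1 + x ^ 2) * u) = -u + -u * x ^ 2 by ring, exp_add]
  ring

theorem integral_Ioi_rpow_mul_exp_neg_one_add_sq_mul {a b u : ℝ} (hb : 0 < b) (hu : 0 < u) :
    ∫ x in Ioi 0, x ^ (2 * b - 1) * (u ^ (a + b - 1) * exp (-((1 + x ^ 2) * u)))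
      = Gamma b / 2 * (u ^ (a - 1) * exp (-u)) := by
  simp_rw [rpow_mul_exp_neg_one_add_sq_mul]
  rw [integral_const_mul, integral_rpow_mul_exp_neg_mul_sq_Ioi hb hu,
    show a - 1 = a + b - 1 + -b by ring, rpow_add hu]
  ring

theorem integrable_rpow_mul_exp_neg_one_add_sq_mul {a b t : ℝ} (ha : 0 < a) (hb : 0 < b)
    (ht : 0 ≤ t) :
    Integrable
      (fun p : ℝ × ℝ => p.1 ^ (2 * b - 1) * (p.2 ^ (a + b - 1) * exp (-((1 + p.1 ^ 2) * p.2))))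
      ((volume.restrict (Ioi 0)).prod (volume.restrict (Ioc 0 t))) := by
  have hmeas : AEStronglyMeasurable (fun p : ℝ × ℝ =>
      p.1 ^ (2 * b - 1) * (p.2 ^ (a + b - 1) * exp (-((1 + p.1 ^ 2) * p.2))))
      ((volume.restrict (Ioi 0)).prod (volume.restrict (Ioc 0 t))) := by
    apply Measurable.aestronglyMeasurable
    fun_prop
  refine (integrable_prod_iff' hmeas).2 ⟨?_, ?_⟩
  · filter_upwards [ae_restrict_mem measurableSet_Ioc] with u hu
    have h := (integrableOn_rpow_mul_exp_neg_mul_sq hu.1 (by linarith : -1 < 2 * b - 1)).const_mul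
      (u ^ (a + b - 1) * exp (-u))
    exact IntegrableOn.congr_fun h (fun x _ => (rpow_mul_exp_neg_one_add_sq_mul a b u x).symm)
      measurableSet_Ioi
  · have hbase : IntegrableOn (fun u : ℝ => u ^ (a - 1) * exp (-u)) (Ioc 0 t) := by
      rw [← intervalIntegrable_iff_integrableOn_Ioc_of_le ht]
      exact (intervalIntegral.intervalIntegrable_rpow' (by linarith)).mul_continuousOn
        (by fun_prop)
    refine IntegrableOn.congr_fun (hbase.const_mul (Gamma b / 2)) (fun u hu => ?_)
      measurableSet_Ioc
    rw [← integral_Ioi_rpow_mul_exp_neg_one_add_sq_mul hb hu.1]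
    refine setIntegral_congr_fun measurableSet_Ioi fun x hx => ?_
    simp only [norm_eq_abs]
    exact (abs_of_nonneg (by have := hx.out; have := hu.1; positivity)).symm

theorem integral_Ioi_rpow_mul_integral_Ioc_exp {a b t : ℝ} (ha : 0 < a) (hb : 0 < b)
    (ht : 0 ≤ t) :
    ∫ x in Ioi 0, x ^ (2 * b - 1) * ∫ u in Ioc 0 t, u ^ (a + b - 1) * exp (-((1 + x ^ 2) * u))
      = Gamma b / 2 * lowerGamma a t := by
  simp_rw [← integral_const_mul]
  rw [integral_integral_swap (integrable_rpow_mul_exp_neg_one_add_sq_mul ha hb ht),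
    setIntegral_congr_fun measurableSet_Ioc
      fun u hu => integral_Ioi_rpow_mul_exp_neg_one_add_sq_mul hb hu.1,
    integral_const_mul, lowerGamma_eq_integral_Ioc a ht]

theorem lowerGamma_div_cos_sq_mul {a b t θ : ℝ} (ht : 0 ≤ t) (hθ : θ ∈ Ioo 0 (π / 2)) :
    lowerGamma (a + b) (t / cos θ ^ 2) * cos θ ^ (2 * a - 1) * sin θ ^ (2 * b - 1)
      = tan θ ^ (2 * b - 1)
          * (∫ u in Ioc 0 t, u ^ (a + b - 1) * exp (-((1 + tan θ ^ 2) * u))) / cos θ ^ 2 := by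
  have hcos := cos_pos_of_mem_Ioo_zero_pi_div_two hθ
  have hsin : 0 < sin θ := sin_pos_of_pos_of_lt_pi hθ.1 (by linarith [hθ.2, pi_pos])
  have hsec : 1 + tan θ ^ 2 = cos θ ^ (-2 : ℝ) := by
    rw [← inv_inv (1 + tan θ ^ 2), inv_one_add_tan_sq hcos.ne', rpow_neg hcos.le, rpow_two]
  have hcancel : (1 + tan θ ^ 2) ^ (a + b) * cos θ ^ (2 * a - 1) * cos θ ^ (2 * b - 1)
      * cos θ ^ 2 = 1 := by
    rw [hsec, ← rpow_mul hcos.le, ← rpow_two, ← rpow_add hcos, ← rpow_add hcos,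
      ← rpow_add hcos]
    ring_nf
    exact rpow_zero _
  have harg : t / cos θ ^ 2 = (1 + tan θ ^ 2) * t := by
    rw [hsec, rpow_neg hcos.le, rpow_two, div_eq_inv_mul]
  rw [harg, lowerGamma_const_mul _ (by positivity) ht, tan_eq_sin_div_cos, div_rpow hsin.le hcos.le,
    ← tan_eq_sin_div_cos, div_mul_eq_mul_div, div_div, eq_div_iff (by positivity)]
  linear_combination (∫ u in Ioc 0 t, u ^ (a + b - 1) * exp (-((1 + tan θ ^ 2) * u)))
    * sin θ ^ (2 * b - 1) * hcancel

theorem stmt_2 (a b t : ℝ) (ha : 0 < a) (hb : 0 < b) (ht : 0 ≤ t) :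
    lowerGamma a t * Real.Gamma b
      = 2 * ∫ θ in (0:ℝ)..(π / 2),
          lowerGamma (a + b) (t / Real.cos θ ^ 2)
            * Real.cos θ ^ (2 * a - 1) * Real.sin θ ^ (2 * b - 1) := by
  rw [intervalIntegral.integral_of_le pi_div_two_pos.le, integral_Ioc_eq_integral_Ioo,
    setIntegral_congr_fun measurableSet_Ioo fun θ hθ => lowerGamma_div_cos_sq_mul ht hθ,
    integral_comp_tan_div_cos_sq
      (fun x => x ^ (2 * b - 1) * ∫ u in Ioc 0 t, u ^ (a + b - 1) * exp (-((1 + x ^ 2) * u))),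
    integral_Ioi_rpow_mul_integral_Ioc_exp ha hb ht]
  ring
end

section
/- For every real a with 0 < a < 1 and every real t ≥ 0, γ(a,t) · Γ(1-a) = 2 ∫₀^{π/2} (1 - e^{-t sec²θ}) · cot^{2a-1}(θ) dθ. -/
open Real MeasureTheory Set

lemma cot_rpow_eq_tan_rpow_neg {θ : ℝ} (h : 0 ≤ tan θ) (p : ℝ) :
    cot θ ^ p = tan θ ^ (-p) := by
  rw [cot_eq_cos_div_sin, ← inv_div, ← tan_eq_sin_div_cos, inv_rpow h, rpow_neg h]

lemma integral_Ioo_zero_pi_div_two_comp_tan (g : ℝ → ℝ) :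
    ∫ θ in Ioo 0 (π / 2), (cos θ ^ 2)⁻¹ * g (tan θ) = ∫ u in Ioi 0, g u := by
  have hcos : ∀ θ ∈ Ioo 0 (π / 2), cos θ ≠ 0 := fun θ hθ =>
    (cos_pos_of_mem_Ioo ⟨by linarith [pi_pos, hθ.1], hθ.2⟩).ne'
  have hsub : Ioo 0 (π / 2) ⊆ Ioo (-(π / 2)) (π / 2) := fun θ hθ =>
    ⟨by linarith [pi_pos, hθ.1], hθ.2⟩
  rw [← tan_image_Ioo_zero_pi_div_two,
    integral_image_eq_integral_abs_deriv_smul measurableSet_Ioo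
      (fun θ hθ => (hasDerivAt_tan (hcos θ hθ)).hasDerivWithinAt) (injOn_tan.mono hsub)]
  refine setIntegral_congr_fun measurableSet_Ioo fun θ _ => ?_
  rw [abs_of_nonneg (by positivity), one_div, smul_eq_mul]

lemma integral_Ioc_exp_neg_mul {c t : ℝ} (hc : c ≠ 0) (ht : 0 ≤ t) :
    ∫ s in Ioc 0 t, exp (-(s * c)) = (1 - exp (-(t * c))) / c := by
  have hneg : ∀ s, -(s * c) = -c * s := fun s => by ring
  simp_rw [← intervalIntegral.integral_of_le ht, hneg,
    intervalIntegral.integral_comp_mul_left exp (neg_ne_zero.mpr hc), integral_exp,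
    mul_zero, exp_zero, smul_eq_mul]
  field_simp
  ring_nf

lemma exp_neg_mul_one_add_sq (s u : ℝ) :
    exp (-(s * (1 + u ^ 2))) = exp (-s) * exp (-s * u ^ (2 : ℝ)) := by
  rw [rpow_two, ← exp_add]
  ring_nf

section

variable {a : ℝ}

lemma integrableOn_rpow_mul_exp_neg_mul_one_add_sq (ha : a < 1) {s : ℝ} (hs : 0 < s) :
    IntegrableOn (fun u => u ^ (1 - 2 * a) * exp (-(s * (1 + u ^ 2)))) (Ioi 0) := by
  simp_rw [exp_neg_mul_one_add_sq, mul_left_comm _ (exp (-s))]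
  exact (integrableOn_rpow_mul_exp_neg_mul_rpow (by linarith) two_pos hs).const_mul _

lemma integral_rpow_mul_exp_neg_mul_one_add_sq (ha : a < 1) {s : ℝ} (hs : 0 < s) :
    ∫ u in Ioi 0, u ^ (1 - 2 * a) * exp (-(s * (1 + u ^ 2)))
      = s ^ (a - 1) * exp (-s) * (Gamma (1 - a) / 2) := by
  simp_rw [exp_neg_mul_one_add_sq, mul_left_comm _ (exp (-s))]
  rw [integral_const_mul, integral_rpow_mul_exp_neg_mul_rpow two_pos (by linarith) hs,
    show -(1 - 2 * a + 1) / 2 = a - 1 by ring, show (1 - 2 * a + 1) / 2 = 1 - a by ring]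
  ring

lemma integrable_rpow_mul_exp_neg_mul_one_add_sq_prod (ha0 : 0 < a) (ha1 : a < 1) (t : ℝ) :
    Integrable (Function.uncurry fun s u => u ^ (1 - 2 * a) * exp (-(s * (1 + u ^ 2))))
      ((volume.restrict (Ioc 0 t)).prod (volume.restrict (Ioi 0))) := by
  refine (integrable_prod_iff (by fun_prop)).mpr ⟨?_, ?_⟩
  · filter_upwards [ae_restrict_mem measurableSet_Ioc] with s hs
    exact integrableOn_rpow_mul_exp_neg_mul_one_add_sq ha1 hs.1
  · have hGamma : IntegrableOn (fun s => s ^ (a - 1) * exp (-s) * (Gamma (1 - a) / 2))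
        (Ioc 0 t) := by
      simp_rw [mul_comm _ (exp _)]
      exact ((GammaIntegral_convergent ha0).mono_set Ioc_subset_Ioi_self).mul_const _
    refine hGamma.congr ?_
    filter_upwards [ae_restrict_mem measurableSet_Ioc] with s hs
    rw [← integral_rpow_mul_exp_neg_mul_one_add_sq ha1 hs.1]
    refine setIntegral_congr_fun measurableSet_Ioi fun u hu => ?_
    exact (norm_of_nonneg (mul_nonneg (rpow_nonneg hu.le _) (exp_pos _).le)).symm

lemma integral_Ioc_rpow_mul_exp_neg_mul_one_add_sq {t : ℝ} (ht : 0 ≤ t) (u : ℝ) :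
    ∫ s in Ioc 0 t, u ^ (1 - 2 * a) * exp (-(s * (1 + u ^ 2)))
      = u ^ (1 - 2 * a) * (1 - exp (-(t * (1 + u ^ 2)))) / (1 + u ^ 2) := by
  rw [integral_const_mul, integral_Ioc_exp_neg_mul (by positivity) ht, mul_div_assoc]

end

theorem stmt_4 (a t : ℝ) (ha0 : 0 < a) (ha1 : a < 1) (ht : 0 ≤ t) :
    lowerGamma a t * Real.Gamma (1 - a)
      = 2 * ∫ θ in (0:ℝ)..(π / 2),
          (1 - Real.exp (-(t / Real.cos θ ^ 2))) * Real.cot θ ^ (2 * a - 1) := by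
  have hsubst : ∫ θ in (0:ℝ)..(π / 2), (1 - exp (-(t / cos θ ^ 2))) * cot θ ^ (2 * a - 1)
      = ∫ u in Ioi 0, ∫ s in Ioc 0 t, u ^ (1 - 2 * a) * exp (-(s * (1 + u ^ 2))) := by
    rw [intervalIntegral.integral_of_le (by positivity), integral_Ioc_eq_integral_Ioo,
      ← integral_Ioo_zero_pi_div_two_comp_tan]
    refine setIntegral_congr_fun measurableSet_Ioo fun θ ⟨hθ0, hθ1⟩ => ?_
    have hcos : 0 < cos θ := cos_pos_of_mem_Ioo ⟨by linarith [pi_pos], hθ1⟩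
    rw [integral_Ioc_rpow_mul_exp_neg_mul_one_add_sq ht,
      cot_rpow_eq_tan_rpow_neg (tan_pos_of_pos_of_lt_pi_div_two hθ0 hθ1).le,
      ← inv_one_add_tan_sq hcos.ne', inv_inv, neg_sub]
    field_simp
  rw [hsubst,
    ← integral_integral_swap (integrable_rpow_mul_exp_neg_mul_one_add_sq_prod ha0 ha1 t),
    lowerGamma, intervalIntegral.integral_of_le ht, ← integral_mul_const, ← integral_const_mul]
  refine setIntegral_congr_fun measurableSet_Ioc fun s hs => ?_
  rw [integral_rpow_mul_exp_neg_mul_one_add_sq ha1 hs.1]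
  ring
end

section
/- For every real a with 0 < a < 1 and every real t ≥ 0, γ(a,t) · Γ(1-a) = π csc(π a) − 2 ∫₀^{π/2} e^{-t sec²θ} · cot^{2a-1}(θ) dθ. -/
open Real MeasureTheory Set

/-!
Split `Γ(a) = γ(a,t) + Γ(a,t)` and use the reflection formula `Γ(a) Γ(1-a) = π / sin (π a)`.
For the upper part, `u^(a-1) Γ(1-a) = e^u ∫₀^∞ e^(-u(1+y)) y^(-a) dy`; exchanging the order of
integration gives `Γ(a,t) Γ(1-a) = ∫₀^∞ y^(-a) e^(-t(1+y)) / (1+y) dy`, and the substitution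
`y = tan² θ` turns this into `2 ∫₀^(π/2) e^(-t sec² θ) cot^(2a-1) θ dθ`.
-/

noncomputable def upperGamma (s x : ℝ) : ℝ := ∫ u in Ioi x, exp (-u) * u ^ (s - 1)

theorem lowerGamma_add_upperGamma {s x : ℝ} (hs : 0 < s) (hx : 0 ≤ x) :
    lowerGamma s x + upperGamma s x = Gamma s := by
  have hlower : lowerGamma s x = ∫ u in Ioc 0 x, exp (-u) * u ^ (s - 1) := by
    rw [lowerGamma, intervalIntegral.integral_of_le hx]
    exact setIntegral_congr_fun measurableSet_Ioc fun u _ => mul_comm _ _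
  rw [hlower, upperGamma, Gamma_eq_integral hs, ← Ioc_union_Ioi_eq_Ioi hx,
    setIntegral_union (Ioc_disjoint_Ioi le_rfl) measurableSet_Ioi
      ((GammaIntegral_convergent hs).mono_set Ioc_subset_Ioi_self)
      ((GammaIntegral_convergent hs).mono_set (Ioi_subset_Ioi hx))]

theorem integral_exp_neg_mul_one_add_mul_rpow_neg {a u : ℝ} (ha : a < 1) (hu : 0 < u) :
    ∫ y in Ioi (0:ℝ), exp (-(1 + y) * u) * y ^ (-a)
      = exp (-u) * u ^ (a - 1) * Gamma (1 - a) := by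
  have hsplit : ∀ y : ℝ, exp (-(1 + y) * u) * y ^ (-a)
      = exp (-u) * (y ^ ((1 - a) - 1) * exp (-(u * y))) := fun y => by
    rw [sub_sub_cancel_left, show -(1 + y) * u = -u + -(u * y) by ring, exp_add]
    ring
  simp_rw [hsplit]
  rw [integral_const_mul, integral_rpow_mul_exp_neg_mul_Ioi (by linarith) hu, one_div,
    inv_rpow hu.le, ← rpow_neg hu.le, neg_sub, mul_assoc]

theorem integrableOn_exp_neg_mul_one_add_mul_rpow_neg {a u : ℝ} (ha : a < 1) (hu : 0 < u) :
    IntegrableOn (fun y : ℝ => exp (-(1 + y) * u) * y ^ (-a)) (Ioi 0) := by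
  refine IntegrableOn.congr_fun ((integrableOn_rpow_mul_exp_neg_mul_rpow (s := -a)
    (by linarith) one_pos hu).const_mul (exp (-u))) (fun y _ => ?_) measurableSet_Ioi
  rw [rpow_one, show -(1 + y) * u = -u + -u * y by ring, exp_add]
  ring

theorem integral_exp_neg_mul_Ioi {c : ℝ} (hc : 0 < c) (t : ℝ) :
    ∫ u in Ioi t, exp (-c * u) = exp (-c * t) / c := by
  rw [integral_exp_mul_Ioi (neg_lt_zero.mpr hc), neg_div_neg_eq]

theorem upperGamma_mul_Gamma_one_sub {a t : ℝ} (ha0 : 0 < a) (ha1 : a < 1) (ht : 0 ≤ t) :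
    upperGamma a t * Gamma (1 - a)
      = ∫ y in Ioi (0:ℝ), y ^ (-a) * (exp (-(t * (1 + y))) / (1 + y)) := by
  let K : ℝ → ℝ → ℝ := fun u y => exp (-(1 + y) * u) * y ^ (-a)
  have hpos : ∀ u ∈ Ioi t, 0 < u := fun u hu => ht.trans_lt hu
  have hK : Integrable (Function.uncurry K)
      ((volume.restrict (Ioi t)).prod (volume.restrict (Ioi 0))) := by
    refine (integrable_prod_iff (by fun_prop)).mpr ⟨?_, ?_⟩
    · filter_upwards [ae_restrict_mem measurableSet_Ioi] with u hu
      exact integrableOn_exp_neg_mul_one_add_mul_rpow_neg ha1 (hpos u hu)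
    · refine IntegrableOn.congr_fun (((GammaIntegral_convergent ha0).mono_set
        (Ioi_subset_Ioi ht)).mul_const (Gamma (1 - a))) (fun u hu => ?_) measurableSet_Ioi
      rw [← integral_exp_neg_mul_one_add_mul_rpow_neg ha1 (hpos u hu)]
      refine setIntegral_congr_fun measurableSet_Ioi fun y hy => ?_
      exact (norm_of_nonneg (by have := mem_Ioi.mp hy; positivity)).symm
  calc upperGamma a t * Gamma (1 - a)
      = ∫ u in Ioi t, ∫ y in Ioi (0:ℝ), K u y := by
        rw [upperGamma, ← integral_mul_const]
        exact setIntegral_congr_fun measurableSet_Ioi fun u hu =>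
          (integral_exp_neg_mul_one_add_mul_rpow_neg ha1 (hpos u hu)).symm
    _ = ∫ y in Ioi (0:ℝ), ∫ u in Ioi t, K u y := integral_integral_swap hK
    _ = _ := by
        refine setIntegral_congr_fun measurableSet_Ioi fun y hy => ?_
        have hy1 : 0 < 1 + y := by have := mem_Ioi.mp hy; linarith
        simp only [K]
        rw [integral_mul_const, integral_exp_neg_mul_Ioi hy1, neg_mul, mul_comm (1 + y) t]
        ring

theorem image_tan_sq_Ioo : (fun θ => tan θ ^ 2) '' Ioo 0 (π / 2) = Ioi 0 := by
  refine Subset.antisymm ?_ fun x hx => ?_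
  · rintro _ ⟨θ, hθ, rfl⟩
    exact pow_pos (tan_pos_of_pos_of_lt_pi_div_two hθ.1 hθ.2) 2
  · refine ⟨arctan √x, ⟨?_, arctan_lt_pi_div_two _⟩, ?_⟩
    · rw [← arctan_zero]
      exact arctan_strictMono (sqrt_pos.mpr hx)
    · simp only [tan_arctan, sq_sqrt (le_of_lt hx)]

theorem injOn_tan_sq : InjOn (fun θ => tan θ ^ 2) (Ioo 0 (π / 2)) := by
  intro θ₁ h₁ θ₂ h₂ h
  have hsub : Ioo 0 (π / 2) ⊆ Ioo (-(π / 2)) (π / 2) :=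
    Ioo_subset_Ioo_left (by linarith [pi_pos])
  refine injOn_tan (hsub h₁) (hsub h₂) ?_
  exact (pow_left_inj₀ (tan_pos_of_pos_of_lt_pi_div_two h₁.1 h₁.2).le
    (tan_pos_of_pos_of_lt_pi_div_two h₂.1 h₂.2).le two_ne_zero).mp h

theorem hasDerivAt_tan_sq {θ : ℝ} (h : cos θ ≠ 0) :
    HasDerivAt (fun θ => tan θ ^ 2) (2 * tan θ / cos θ ^ 2) θ := by
  refine ((hasDerivAt_tan h).fun_pow 2).congr_deriv ?_
  push_cast
  ring

theorem integral_Ioi_eq_integral_tan_sq (g : ℝ → ℝ) :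
    ∫ y in Ioi (0:ℝ), g y = ∫ θ in Ioo 0 (π / 2), 2 * tan θ / cos θ ^ 2 * g (tan θ ^ 2) := by
  have hcos : ∀ θ ∈ Ioo 0 (π / 2), 0 < cos θ := fun θ hθ =>
    cos_pos_of_mem_Ioo ⟨by linarith [hθ.1, pi_pos], hθ.2⟩
  rw [← image_tan_sq_Ioo, integral_image_eq_integral_abs_deriv_smul measurableSet_Ioo
    (fun θ hθ => (hasDerivAt_tan_sq (hcos θ hθ).ne').hasDerivWithinAt) injOn_tan_sq]
  refine setIntegral_congr_fun measurableSet_Ioo fun θ hθ => ?_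
  have htan : 0 < tan θ := tan_pos_of_pos_of_lt_pi_div_two hθ.1 hθ.2
  have hcosθ : 0 < cos θ := hcos θ hθ
  rw [smul_eq_mul, abs_of_pos (by positivity)]

theorem integral_rpow_neg_mul_exp_div_eq_integral_cot (a t : ℝ) :
    ∫ y in Ioi (0:ℝ), y ^ (-a) * (exp (-(t * (1 + y))) / (1 + y))
      = 2 * ∫ θ in (0:ℝ)..(π / 2), exp (-(t / cos θ ^ 2)) * cot θ ^ (2 * a - 1) := by
  rw [integral_Ioi_eq_integral_tan_sq, intervalIntegral.integral_of_le (by positivity),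
    integral_Ioc_eq_integral_Ioo, ← integral_const_mul]
  refine setIntegral_congr_fun measurableSet_Ioo fun θ hθ => ?_
  have hcos : 0 < cos θ := cos_pos_of_mem_Ioo ⟨by linarith [hθ.1, pi_pos], hθ.2⟩
  have htan : 0 < tan θ := tan_pos_of_pos_of_lt_pi_div_two hθ.1 hθ.2
  have hsec : 1 + tan θ ^ 2 = 1 / cos θ ^ 2 := by
    rw [one_div, ← inv_one_add_tan_sq hcos.ne', inv_inv]
  have hcot : cot θ ^ (2 * a - 1) = tan θ * (tan θ ^ 2) ^ (-a) := by
    rw [cot_eq_cos_div_sin, ← inv_div, ← tan_eq_sin_div_cos, inv_rpow htan.le,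
      ← rpow_neg htan.le, ← rpow_natCast, ← rpow_mul htan.le, neg_sub, sub_eq_add_neg,
      rpow_add htan, rpow_one]
    norm_num
  rw [hsec, hcot]
  field_simp

theorem stmt_5 (a t : ℝ) (ha0 : 0 < a) (ha1 : a < 1) (ht : 0 ≤ t) :
    lowerGamma a t * Real.Gamma (1 - a)
      = π / Real.sin (π * a)
        - 2 * ∫ θ in (0:ℝ)..(π / 2),
            Real.exp (-(t / Real.cos θ ^ 2)) * Real.cot θ ^ (2 * a - 1) := by
  rw [← integral_rpow_neg_mul_exp_div_eq_integral_cot,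
    ← upperGamma_mul_Gamma_one_sub ha0 ha1 ht, ← Gamma_mul_Gamma_one_sub,
    ← lowerGamma_add_upperGamma ha0 ht]
  ring
end

section
/- For every real a with -1 < a < 0, the integral ∫₀^∞ (1 - e^{-t}) / t^{1-a} dt equals -Γ(a+1)/a. -/
open Real MeasureTheory Set
open Filter Topology

/-
Integrate by parts with `u = 1 - e^{-t}` and `v = t^a / a`: the boundary term
`(1 - e^{-t}) t^a / a` vanishes at `0` (as `1 - e^{-t} ≤ t` and `a + 1 > 0`) and at `∞`
(as `a < 0`), leaving `-(1/a) ∫₀^∞ e^{-t} t^a dt = -Γ(a+1)/a`.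
-/

lemma one_sub_exp_neg_nonneg {t : ℝ} (ht : 0 ≤ t) : 0 ≤ 1 - exp (-t) :=
  sub_nonneg.2 (exp_le_one_iff.2 (neg_nonpos.2 ht))

lemma one_sub_exp_neg_le_self (t : ℝ) : 1 - exp (-t) ≤ t := by
  linarith [add_one_le_exp (-t)]

lemma one_sub_exp_neg_mul_rpow_le_rpow_add_one {t : ℝ} (ht : 0 < t) (s : ℝ) :
    (1 - exp (-t)) * t ^ s ≤ t ^ (s + 1) := by
  rw [rpow_add_one ht.ne', mul_comm (t ^ s) t]
  exact mul_le_mul_of_nonneg_right (one_sub_exp_neg_le_self t) (rpow_nonneg ht.le s)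

lemma one_sub_exp_neg_mul_rpow_le_rpow {t : ℝ} (ht : 0 ≤ t) (s : ℝ) :
    (1 - exp (-t)) * t ^ s ≤ t ^ s :=
  mul_le_of_le_one_left (rpow_nonneg ht s) (by linarith [exp_pos (-t)])

lemma integrableOn_one_sub_exp_neg_mul_rpow {s : ℝ} (hs₁ : -2 < s) (hs₂ : s < -1) :
    IntegrableOn (fun t ↦ (1 - exp (-t)) * t ^ s) (Ioi 0) := by
  have hmeas : AEStronglyMeasurable (fun t : ℝ ↦ (1 - exp (-t)) * t ^ s) :=
    (by fun_prop : Measurable fun t : ℝ ↦ (1 - exp (-t)) * t ^ s).aestronglyMeasurable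
  rw [← Ioc_union_Ioi_eq_Ioi zero_le_one, integrableOn_union]
  constructor
  · have hdom : IntegrableOn (fun t : ℝ ↦ t ^ (s + 1)) (Ioc 0 1) :=
      (intervalIntegrable_iff_integrableOn_Ioc_of_le zero_le_one).1
        (intervalIntegral.intervalIntegrable_rpow' (by linarith))
    refine hdom.mono' hmeas.restrict ?_
    filter_upwards [ae_restrict_mem measurableSet_Ioc] with t ht
    rw [norm_of_nonneg (mul_nonneg (one_sub_exp_neg_nonneg ht.1.le) (rpow_nonneg ht.1.le s))]
    exact one_sub_exp_neg_mul_rpow_le_rpow_add_one ht.1 s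
  · refine (integrableOn_Ioi_rpow_of_lt hs₂ one_pos).mono' hmeas.restrict ?_
    filter_upwards [ae_restrict_mem measurableSet_Ioi] with t ht
    have ht₀ : 0 ≤ t := zero_le_one.trans ht.le
    rw [norm_of_nonneg (mul_nonneg (one_sub_exp_neg_nonneg ht₀) (rpow_nonneg ht₀ s))]
    exact one_sub_exp_neg_mul_rpow_le_rpow ht₀ s

lemma tendsto_one_sub_exp_neg_mul_rpow_nhdsGT_zero {s : ℝ} (hs : -1 < s) :
    Tendsto (fun t ↦ (1 - exp (-t)) * t ^ s) (𝓝[>] 0) (𝓝 0) := by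
  have hpow : Tendsto (fun t : ℝ ↦ t ^ (s + 1)) (𝓝[>] 0) (𝓝 0) := by
    have := (continuousAt_rpow_const 0 (s + 1) (Or.inr (by linarith))).tendsto
    rw [zero_rpow (by linarith)] at this
    exact this.mono_left nhdsWithin_le_nhds
  refine tendsto_of_tendsto_of_tendsto_of_le_of_le' tendsto_const_nhds hpow ?_ ?_
  all_goals filter_upwards [self_mem_nhdsWithin] with t (ht : 0 < t)
  · exact mul_nonneg (one_sub_exp_neg_nonneg ht.le) (rpow_nonneg ht.le s)
  · exact one_sub_exp_neg_mul_rpow_le_rpow_add_one ht s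

lemma tendsto_one_sub_exp_neg_mul_rpow_atTop {s : ℝ} (hs : s < 0) :
    Tendsto (fun t ↦ (1 - exp (-t)) * t ^ s) atTop (𝓝 0) := by
  have h₁ : Tendsto (fun t : ℝ ↦ 1 - exp (-t)) atTop (𝓝 1) := by
    simpa using tendsto_exp_neg_atTop_nhds_zero.const_sub 1
  have h₂ : Tendsto (fun t : ℝ ↦ t ^ s) atTop (𝓝 0) := by
    simpa using tendsto_rpow_neg_atTop (y := -s) (by linarith)
  simpa using h₁.mul h₂

theorem stmt_6 (a : ℝ) (ha0 : -1 < a) (ha1 : a < 0) :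
    ∫ t in Ioi (0:ℝ), (1 - Real.exp (-t)) / t ^ (1 - a) = -(Real.Gamma (a + 1)) / a := by
  have hu : ∀ t ∈ Ioi (0:ℝ), HasDerivAt (fun t ↦ 1 - exp (-t)) (exp (-t)) t := fun t _ ↦ by
    simpa using ((hasDerivAt_neg t).exp).const_sub 1
  have hv : ∀ t ∈ Ioi (0:ℝ), HasDerivAt (fun t ↦ t ^ a / a) (t ^ (a - 1)) t := fun t ht ↦ by
    simpa [mul_div_cancel_left₀ _ ha1.ne] using
      (hasDerivAt_rpow_const (p := a) (Or.inl (ne_of_gt ht))).div_const a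
  have hGamma : IntegrableOn (fun t ↦ exp (-t) * t ^ a) (Ioi 0) := by
    simpa using GammaIntegral_convergent (s := a + 1) (by linarith)
  have hparts := integral_Ioi_mul_deriv_eq_deriv_mul hu hv
    (integrableOn_one_sub_exp_neg_mul_rpow (by linarith) (by linarith))
    (by simp only [Pi.mul_def, mul_div_assoc']; exact hGamma.div_const a)
    (by simpa only [Pi.mul_def, mul_div_assoc', zero_div] using
      (tendsto_one_sub_exp_neg_mul_rpow_nhdsGT_zero ha0).div_const a)
    (by simpa only [Pi.mul_def, mul_div_assoc', zero_div] using
      (tendsto_one_sub_exp_neg_mul_rpow_atTop ha1).div_const a)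
  calc ∫ t in Ioi (0:ℝ), (1 - exp (-t)) / t ^ (1 - a)
      = ∫ t in Ioi (0:ℝ), (1 - exp (-t)) * t ^ (a - 1) :=
        setIntegral_congr_fun measurableSet_Ioi fun t (ht : 0 < t) ↦ by
          rw [div_eq_mul_inv, ← rpow_neg ht.le, neg_sub]
    _ = -(∫ t in Ioi (0:ℝ), exp (-t) * t ^ a) / a := by
        rw [hparts, sub_zero, zero_sub]
        simp only [mul_div_assoc', integral_div, neg_div]
    _ = -Gamma (a + 1) / a := by
        rw [Gamma_eq_integral (by linarith), add_sub_cancel_right]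
end

section
/- For all real a > 0 and t ≥ 0, e^{a t} · erfc(√(a t)) = (2/π) ∫₀^{π/2} e^{-a t tan²θ} dθ. -/
open Real MeasureTheory Set

/-!
Substituting `x = tan θ` turns the right-hand side into `(2/π) K(a t)` with
`K c = ∫₀^∞ e^{-c x²} / (1 + x²) dx`. Since `-x²/(1+x²) = 1/(1+x²) - 1`, differentiation under the
integral gives `K' c = K c - √(π/c)/2`, and then `(2/π) e^{-c} K c + erf √c` has derivative zero
for `c > 0`. It is continuous on `[0, ∞)` and equals `(2/π) K 0 = 1` at `c = 0`.
-/

open Filter Topology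

lemma arctan_image_Ioi_zero : arctan '' Ioi 0 = Ioo 0 (π / 2) := by
  ext θ
  constructor
  · rintro ⟨x, hx, rfl⟩
    exact ⟨arctan_zero ▸ arctan_strictMono hx, arctan_lt_pi_div_two x⟩
  · rintro ⟨h0, hπ⟩
    exact ⟨tan θ, tan_pos_of_pos_of_lt_pi_div_two h0 hπ, arctan_tan (by linarith [pi_pos]) hπ⟩

lemma integral_Ioo_comp_tan {E : Type*} [NormedAddCommGroup E] [NormedSpace ℝ E] (g : ℝ → E) :
    ∫ θ in Ioo 0 (π / 2), g (tan θ) = ∫ x in Ioi 0, (1 + x ^ 2)⁻¹ • g x := by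
  rw [← arctan_image_Ioi_zero, integral_image_eq_integral_abs_deriv_smul measurableSet_Ioi
    (fun x _ => (hasDerivAt_arctan x).hasDerivWithinAt) arctan_injective.injOn]
  refine setIntegral_congr_fun measurableSet_Ioi fun x _ => ?_
  rw [tan_arctan, abs_of_pos (by positivity), one_div]

lemma continuous_exp_neg_mul_sq_div (c : ℝ) :
    Continuous fun x : ℝ => exp (-c * x ^ 2) / (1 + x ^ 2) := by
  fun_prop (disch := intro; positivity)

lemma norm_exp_neg_mul_sq_div_le {c : ℝ} (hc : 0 ≤ c) (x : ℝ) :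
    ‖exp (-c * x ^ 2) / (1 + x ^ 2)‖ ≤ (1 + x ^ 2)⁻¹ := by
  rw [norm_div, norm_of_nonneg (exp_pos _).le, norm_of_nonneg (by positivity), div_eq_mul_inv]
  exact mul_le_of_le_one_left (by positivity) (exp_le_one_iff.2 (by nlinarith [sq_nonneg x]))

lemma integrableOn_exp_neg_mul_sq_div_one_add_sq {c : ℝ} (hc : 0 ≤ c) :
    IntegrableOn (fun x => exp (-c * x ^ 2) / (1 + x ^ 2)) (Ioi 0) :=
  integrable_inv_one_add_sq.integrableOn.mono'
    (continuous_exp_neg_mul_sq_div c).aestronglyMeasurable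
    (ae_of_all _ (norm_exp_neg_mul_sq_div_le hc))

noncomputable def gaussCauchyIntegral (c : ℝ) : ℝ := ∫ x in Ioi 0, exp (-c * x ^ 2) / (1 + x ^ 2)

lemma continuousOn_gaussCauchyIntegral : ContinuousOn gaussCauchyIntegral (Ici 0) :=
  continuousOn_of_dominated (fun c _ => (continuous_exp_neg_mul_sq_div c).aestronglyMeasurable)
    (fun c hc => ae_of_all _ (norm_exp_neg_mul_sq_div_le hc))
    integrable_inv_one_add_sq.integrableOn
    (ae_of_all _ fun _ => by fun_prop (disch := intro; positivity))

lemma gaussCauchyIntegral_zero : gaussCauchyIntegral 0 = π / 2 := by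
  simp [gaussCauchyIntegral]

lemma norm_sq_mul_exp_neg_mul_sq_div_le {b c : ℝ} (hbc : b ≤ c) (x : ℝ) :
    ‖-x ^ 2 * exp (-c * x ^ 2) / (1 + x ^ 2)‖ ≤ exp (-b * x ^ 2) := by
  have hx : x ^ 2 / (1 + x ^ 2) ≤ 1 := div_le_one_of_le₀ (by linarith) (by positivity)
  rw [neg_mul, neg_div, norm_neg, norm_of_nonneg (by positivity), mul_div_right_comm]
  calc x ^ 2 / (1 + x ^ 2) * exp (-c * x ^ 2) ≤ 1 * exp (-b * x ^ 2) := by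
        gcongr
    _ = exp (-b * x ^ 2) := one_mul _

lemma hasDerivAt_gaussCauchyIntegral {c : ℝ} (hc : 0 < c) :
    HasDerivAt gaussCauchyIntegral (gaussCauchyIntegral c - √(π / c) / 2) c := by
  have hball : Metric.ball c (c / 2) ∈ 𝓝 c := Metric.ball_mem_nhds c (half_pos hc)
  have hbound : ∀ x, ∀ b ∈ Metric.ball c (c / 2),
      ‖-x ^ 2 * exp (-b * x ^ 2) / (1 + x ^ 2)‖ ≤ exp (-(c / 2) * x ^ 2) := fun x b hb =>
    norm_sq_mul_exp_neg_mul_sq_div_le (by linarith [(abs_lt.1 (Metric.mem_ball.1 hb)).1]) x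
  have hdiff : ∀ x b : ℝ, HasDerivAt (fun b => exp (-b * x ^ 2) / (1 + x ^ 2))
      (-x ^ 2 * exp (-b * x ^ 2) / (1 + x ^ 2)) b := fun x b => by
    simpa [div_eq_mul_inv, mul_comm, mul_assoc] using
      ((hasDerivAt_id b).mul_const (x ^ 2)).neg.exp.mul_const (1 + x ^ 2)⁻¹
  have hsplit : (fun x => -x ^ 2 * exp (-c * x ^ 2) / (1 + x ^ 2))
      = fun x => exp (-c * x ^ 2) / (1 + x ^ 2) - exp (-c * x ^ 2) := by
    ext x
    field_simp
    ring
  obtain ⟨-, hderiv⟩ := hasDerivAt_integral_of_dominated_loc_of_deriv_le hball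
    (Eventually.of_forall fun b => (continuous_exp_neg_mul_sq_div b).aestronglyMeasurable)
    (integrableOn_exp_neg_mul_sq_div_one_add_sq hc.le)
    ((by fun_prop (disch := intro; positivity) : Continuous _).aestronglyMeasurable)
    (ae_of_all _ hbound) (integrableOn_Ioi_exp_neg_mul_sq_iff.2 (half_pos hc))
    (ae_of_all _ fun x b _ => hdiff x b)
  rwa [hsplit, integral_sub (integrableOn_exp_neg_mul_sq_div_one_add_sq hc.le)
    (integrableOn_Ioi_exp_neg_mul_sq_iff.2 hc), integral_gaussian_Ioi] at hderiv

lemma hasDerivAt_erf (x : ℝ) : HasDerivAt erf (2 / √π * exp (-x ^ 2)) x := by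
  have hcont : Continuous fun u : ℝ => exp (-u ^ 2) := by fun_prop
  exact (intervalIntegral.integral_hasDerivAt_right (hcont.intervalIntegrable 0 x)
    (hcont.stronglyMeasurableAtFilter _ _) hcont.continuousAt).const_mul _

lemma continuous_erf : Continuous erf := by
  unfold erf; fun_prop

lemma erf_zero : erf 0 = 0 := by simp [erf]

lemma hasDerivAt_erf_sqrt {x : ℝ} (hx : 0 < x) :
    HasDerivAt (fun y => erf √y) (exp (-x) / √(π * x)) x := by
  refine ((hasDerivAt_erf √x).comp x (hasDerivAt_sqrt hx.ne')).congr_deriv ?_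
  rw [sq_sqrt hx.le, sqrt_mul pi_pos.le]
  field_simp

lemma eq_of_continuousOn_Ici_of_hasDerivAt_zero {f : ℝ → ℝ} {a x : ℝ}
    (hcont : ContinuousOn f (Ici a)) (hderiv : ∀ y > a, HasDerivAt f 0 y) (hx : a ≤ x) :
    f x = f a := by
  rcases hx.eq_or_lt with rfl | hax
  · rfl
  obtain ⟨-, -, hslope⟩ := exists_hasDerivAt_eq_slope f (fun _ => 0) hax
    (hcont.mono Icc_subset_Ici_self) fun y hy => hderiv y hy.1
  rw [eq_comm, div_eq_zero_iff, sub_eq_zero, sub_eq_zero] at hslope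
  exact hslope.resolve_right hax.ne'

lemma exp_mul_erfc_sqrt {c : ℝ} (hc : 0 ≤ c) :
    exp c * erfc √c = 2 / π * gaussCauchyIntegral c := by
  set H := fun x => 2 / π * (exp (-x) * gaussCauchyIntegral x) + erf √x
  have hderiv : ∀ x > 0, HasDerivAt H 0 x := fun x hx => by
    refine ((((hasDerivAt_neg x).exp.mul (hasDerivAt_gaussCauchyIntegral hx)).const_mul
      (2 / π)).add (hasDerivAt_erf_sqrt hx)).congr_deriv ?_
    rw [sqrt_div pi_pos.le, sqrt_mul pi_pos.le]
    field_simp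
    linear_combination -exp (-x) * mul_self_sqrt pi_pos.le
  have hcont : ContinuousOn H (Ici 0) :=
    (continuousOn_const.mul ((continuous_exp.comp continuous_neg).continuousOn.mul
      continuousOn_gaussCauchyIntegral)).add (continuous_erf.comp continuous_sqrt).continuousOn
  have hH : H c = 1 := by
    rw [eq_of_continuousOn_Ici_of_hasDerivAt_zero hcont hderiv hc]
    simp [H, gaussCauchyIntegral_zero, erf_zero, pi_pos.ne']
  calc exp c * erfc √c = exp c * (H c - erf √c) := by rw [hH, erfc]
    _ = 2 / π * gaussCauchyIntegral c := by
      simp only [H, add_sub_cancel_right]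
      rw [exp_neg]
      field_simp

theorem stmt_9 (a t : ℝ) (ha : 0 < a) (ht : 0 ≤ t) :
    Real.exp (a * t) * erfc (Real.sqrt (a * t))
      = (2 / π) * ∫ θ in (0:ℝ)..(π / 2), Real.exp (-(a * t * Real.tan θ ^ 2)) := by
  have hsubst := integral_Ioo_comp_tan fun x => exp (-(a * t * x ^ 2))
  rw [exp_mul_erfc_sqrt (mul_nonneg ha.le ht), intervalIntegral.integral_of_le (by positivity),
    integral_Ioc_eq_integral_Ioo, hsubst]
  simp only [gaussCauchyIntegral, smul_eq_mul, neg_mul, div_eq_inv_mul]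
end

section
/- Let a > 0 and let f : (0,∞) → [0,∞) be measurable, with Laplace transform F(s) = ∫₀^∞ f(t) e^{-s t} dt (valued in [0,∞]). Then, as an identity in [0,∞], ∫₀^∞ f(t) · erfc(a√t) dt = (2a/π) ∫_a^∞ F(s²) / (s √(s² − a²)) ds. -/
open Real MeasureTheory Set

/-! By Tonelli the identity reduces to the kernel identity
`∫ₐ^∞ e^{-s²t} / (s √(s² - a²)) ds = π / (2a) · erfc (a √t)` for `t > 0`.
The substitution `s = a √(1 + v²)` turns the left side into `G(a √t) / a`, where
`G x = ∫₀^∞ e^{-x²(1+v²)} / (1 + v²) dv`. Finally `G x = π/2 · erfc x` for `x ≥ 0`: both sides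
equal `π/2` at `0`, and differentiating under the integral sign and using the Gaussian integral
gives `G' x = -√π e^{-x²}`, which is also the derivative of `π/2 · erfc`. -/

open scoped ENNReal

theorem hasDerivAt_erfc (x : ℝ) : HasDerivAt erfc (-(2 / √π * exp (-x ^ 2))) x :=
  (((by fun_prop : Continuous fun u : ℝ => exp (-u ^ 2)).integral_hasStrictDerivAt 0 x
    |>.hasDerivAt.const_mul (2 / √π)).const_sub 1)

theorem continuous_erfc : Continuous erfc :=
  continuous_iff_continuousAt.2 fun x => (hasDerivAt_erfc x).continuousAt

theorem erfc_zero : erfc 0 = 1 := by simp [erfc, erf]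

/-- The substitution `v = cot θ` turns this into Craig's integral
`∫₀^{π/2} e^{-x²/sin²θ} dθ`. -/
noncomputable def craigIntegral (x : ℝ) : ℝ :=
  ∫ v in Ioi (0:ℝ), exp (-(x ^ 2 * (1 + v ^ 2))) / (1 + v ^ 2)

theorem norm_craigIntegrand_le (x v : ℝ) :
    ‖exp (-(x ^ 2 * (1 + v ^ 2))) / (1 + v ^ 2)‖ ≤ (1 + v ^ 2)⁻¹ := by
  rw [norm_of_nonneg (by positivity), div_eq_mul_inv]
  exact mul_le_of_le_one_left (by positivity) (exp_le_one_iff.2 (neg_nonpos.2 (by positivity)))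

theorem integrableOn_craigIntegrand (x : ℝ) :
    IntegrableOn (fun v => exp (-(x ^ 2 * (1 + v ^ 2))) / (1 + v ^ 2)) (Ioi 0) :=
  integrable_inv_one_add_sq.integrableOn.mono' (Measurable.aestronglyMeasurable (by fun_prop))
    (.of_forall (norm_craigIntegrand_le x))

theorem continuous_craigIntegral : Continuous craigIntegral :=
  continuous_of_dominated (fun _ => Measurable.aestronglyMeasurable (by fun_prop))
    (fun x => .of_forall (norm_craigIntegrand_le x)) integrable_inv_one_add_sq.integrableOn
    (.of_forall fun _ => by fun_prop)

theorem craigIntegral_zero : craigIntegral 0 = π / 2 := by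
  simp [craigIntegral, one_div, integral_Ioi_inv_one_add_sq]

theorem hasDerivAt_craigIntegrand (y v : ℝ) :
    HasDerivAt (fun y => exp (-(y ^ 2 * (1 + v ^ 2))) / (1 + v ^ 2))
      (-(2 * y) * exp (-(y ^ 2 * (1 + v ^ 2)))) y := by
  have hin : HasDerivAt (fun y => -(y ^ 2 * (1 + v ^ 2))) (-(2 * y * (1 + v ^ 2))) y := by
    simpa using ((hasDerivAt_pow 2 y).mul_const (1 + v ^ 2)).fun_neg
  refine (hin.exp.div_const (1 + v ^ 2)).congr_deriv ?_
  field_simp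

theorem hasDerivAt_craigIntegral {x : ℝ} (hx : 0 < x) :
    HasDerivAt craigIntegral (-(√π * exp (-x ^ 2))) x := by
  have hbound : ∀ v, ∀ y ∈ Metric.ball x (x / 2),
      ‖-(2 * y) * exp (-(y ^ 2 * (1 + v ^ 2)))‖ ≤ 3 * x * exp (-(x ^ 2 / 4) * v ^ 2) := by
    intro v y hy
    rw [Metric.mem_ball, dist_eq, abs_lt] at hy
    rw [norm_mul, norm_neg, norm_of_nonneg (by linarith), norm_of_nonneg (exp_pos _).le]
    have hexp : exp (-(y ^ 2 * (1 + v ^ 2))) ≤ exp (-(x ^ 2 / 4) * v ^ 2) :=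
      exp_le_exp.2 (by nlinarith [sq_nonneg v,
        mul_le_mul_of_nonneg_right (show x ^ 2 / 4 ≤ y ^ 2 by nlinarith) (sq_nonneg v)])
    exact mul_le_mul (by linarith) hexp (exp_pos _).le (by linarith)
  have hval :
      ∫ v in Ioi 0, -(2 * x) * exp (-(x ^ 2 * (1 + v ^ 2))) = -(√π * exp (-x ^ 2)) := by
    have hsplit : ∀ v : ℝ, -(2 * x) * exp (-(x ^ 2 * (1 + v ^ 2)))
        = -(2 * x) * exp (-x ^ 2) * exp (-x ^ 2 * v ^ 2) := by
      intro v; rw [mul_assoc, ← exp_add]; ring_nf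
    simp_rw [hsplit, integral_const_mul, integral_gaussian_Ioi, sqrt_div pi_nonneg, sqrt_sq hx.le]
    field_simp
  rw [← hval]
  exact (hasDerivAt_integral_of_dominated_loc_of_deriv_le (μ := volume.restrict (Ioi 0))
    (F := fun y v => exp (-(y ^ 2 * (1 + v ^ 2))) / (1 + v ^ 2))
    (Metric.ball_mem_nhds x (half_pos hx))
    (.of_forall fun _ => Measurable.aestronglyMeasurable (by fun_prop))
    (integrableOn_craigIntegrand x) (Measurable.aestronglyMeasurable (by fun_prop))
    (.of_forall hbound) ((integrable_exp_neg_mul_sq (by positivity)).integrableOn.const_mul _)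
    (.of_forall fun v y _ => hasDerivAt_craigIntegrand y v)).2

theorem craigIntegral_eq_erfc {x : ℝ} (hx : 0 ≤ x) : craigIntegral x = π / 2 * erfc x := by
  rcases hx.eq_or_lt with rfl | hx
  · rw [craigIntegral_zero, erfc_zero, mul_one]
  obtain ⟨c, -, hc⟩ := exists_hasDerivAt_eq_slope (fun y => craigIntegral y - π / 2 * erfc y)
    (fun _ => 0) hx (continuous_craigIntegral.sub (continuous_erfc.const_mul _)).continuousOn
    fun y hy => ((hasDerivAt_craigIntegral hy.1).sub ((hasDerivAt_erfc y).const_mul _)).congr_deriv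
      (by field_simp; rw [sq_sqrt pi_nonneg]; ring)
  rw [eq_comm, div_eq_zero_iff, craigIntegral_zero, erfc_zero] at hc
  rcases hc with hc | hc <;> linarith

theorem image_mul_sqrt_one_add_sq_Ioi {a : ℝ} (ha : 0 < a) :
    (fun v => a * √(1 + v ^ 2)) '' Ioi 0 = Ioi a := by
  ext s
  constructor
  · rintro ⟨v, hv, rfl⟩
    exact lt_mul_of_one_lt_right ha (lt_sqrt zero_le_one |>.2 (by simp at hv ⊢; positivity))
  · intro hs
    have hsa : 1 < s / a := (one_lt_div ha).2 hs
    refine ⟨√((s / a) ^ 2 - 1), sqrt_pos.2 (by nlinarith), ?_⟩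
    dsimp only
    rw [sq_sqrt (by nlinarith), add_sub_cancel, sqrt_sq (by positivity)]
    field_simp

theorem injOn_mul_sqrt_one_add_sq {a : ℝ} (ha : 0 < a) :
    InjOn (fun v => a * √(1 + v ^ 2)) (Ioi 0) := by
  intro v hv w hw h
  have := (sqrt_inj (by positivity) (by positivity)).1 (mul_left_cancel₀ ha.ne' h)
  nlinarith [mem_Ioi.1 hv, mem_Ioi.1 hw]

theorem hasDerivAt_mul_sqrt_one_add_sq (a v : ℝ) :
    HasDerivAt (fun v => a * √(1 + v ^ 2)) (a * v / √(1 + v ^ 2)) v := by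
  have hin : HasDerivAt (fun v => 1 + v ^ 2) (2 * v) v := by
    simpa using (hasDerivAt_pow 2 v).const_add 1
  refine ((hin.sqrt (by positivity)).const_mul a).congr_deriv ?_
  field_simp

theorem lintegral_Ioi_div_mul_sqrt_sq_sub_sq {a : ℝ} (ha : 0 < a) (g : ℝ → ℝ≥0∞) :
    ∫⁻ s in Ioi a, g (s ^ 2) / ENNReal.ofReal (s * √(s ^ 2 - a ^ 2))
      = ∫⁻ v in Ioi 0, g (a ^ 2 * (1 + v ^ 2)) / ENNReal.ofReal (a * (1 + v ^ 2)) := by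
  rw [← image_mul_sqrt_one_add_sq_Ioi ha, lintegral_image_eq_lintegral_abs_deriv_mul
    measurableSet_Ioi (fun v _ => (hasDerivAt_mul_sqrt_one_add_sq a v).hasDerivWithinAt)
    (injOn_mul_sqrt_one_add_sq ha)]
  refine setLIntegral_congr_fun measurableSet_Ioi fun v hv => ?_
  have hv : 0 < v := hv
  have hr : 0 < √(1 + v ^ 2) := by positivity
  have hsq : (a * √(1 + v ^ 2)) ^ 2 = a ^ 2 * (1 + v ^ 2) := by
    rw [mul_pow, sq_sqrt (by positivity)]
  have hroot : √(a ^ 2 * (1 + v ^ 2) - a ^ 2) = a * v := by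
    rw [show a ^ 2 * (1 + v ^ 2) - a ^ 2 = (a * v) ^ 2 by ring, sqrt_sq (by positivity)]
  rw [hsq, hroot, abs_of_pos (by positivity), ENNReal.div_eq_inv_mul, ENNReal.div_eq_inv_mul,
    ← ENNReal.ofReal_inv_of_pos (by positivity), ← ENNReal.ofReal_inv_of_pos (by positivity),
    ← mul_assoc, ← ENNReal.ofReal_mul (by positivity)]
  congr 2
  field_simp
  rw [sq_sqrt (by positivity)]

theorem lintegral_exp_div_eq_erfc {a t : ℝ} (ha : 0 < a) (ht : 0 ≤ t) :
    ∫⁻ v in Ioi 0, ENNReal.ofReal (exp (-(a ^ 2 * (1 + v ^ 2)) * t))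
        / ENNReal.ofReal (a * (1 + v ^ 2))
      = ENNReal.ofReal (π / (2 * a) * erfc (a * √t)) := by
  have hintegrand : ∀ v : ℝ, ENNReal.ofReal (exp (-(a ^ 2 * (1 + v ^ 2)) * t))
        / ENNReal.ofReal (a * (1 + v ^ 2))
      = ENNReal.ofReal (exp (-((a * √t) ^ 2 * (1 + v ^ 2))) / (1 + v ^ 2) / a) := by
    intro v
    rw [← ENNReal.ofReal_div_of_pos (by positivity), mul_pow, sq_sqrt ht, div_div]
    ring_nf
  simp_rw [hintegrand]
  rw [← ofReal_integral_eq_lintegral_ofReal ((integrableOn_craigIntegrand _).div_const a)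
    (.of_forall fun _ => by positivity), integral_div, ← craigIntegral,
    craigIntegral_eq_erfc (by positivity)]
  congr 1
  field_simp

theorem lintegral_laplace_div_swap {μ : Measure ℝ} [SFinite μ] {f : ℝ → ℝ} (hf : Measurable f)
    (hf0 : ∀ t, 0 ≤ f t) {k : ℝ → ℝ} (hk : Measurable k) {w : ℝ → ℝ≥0∞} (hw : Measurable w) :
    ∫⁻ v, (∫⁻ t in Ioi 0, ENNReal.ofReal (f t * exp (-k v * t))) / w v ∂μ
      = ∫⁻ t in Ioi 0, ENNReal.ofReal (f t) * ∫⁻ v, ENNReal.ofReal (exp (-k v * t)) / w v ∂μ := by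
  calc _ = ∫⁻ v, (∫⁻ t in Ioi 0,
          ENNReal.ofReal (f t) * (ENNReal.ofReal (exp (-k v * t)) / w v)) ∂μ := by
        refine lintegral_congr fun v => ?_
        rw [div_eq_mul_inv, ← lintegral_mul_const _ (by fun_prop)]
        refine lintegral_congr fun t => ?_
        rw [ENNReal.ofReal_mul (hf0 t), mul_assoc, div_eq_mul_inv]
    _ = _ := lintegral_lintegral_swap (Measurable.aemeasurable (by fun_prop))
    _ = _ := lintegral_congr fun t => lintegral_const_mul _ (by fun_prop)

theorem stmt_11 (a : ℝ) (ha : 0 < a) (f : ℝ → ℝ) (hf : Measurable f)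
    (hf0 : ∀ t, 0 ≤ f t) (F : ℝ → ENNReal)
    (hF : ∀ s : ℝ, F s = ∫⁻ t in Ioi (0:ℝ), ENNReal.ofReal (f t * Real.exp (-s * t))) :
    (∫⁻ t in Ioi (0:ℝ), ENNReal.ofReal (f t * erfc (a * Real.sqrt t)))
      = ENNReal.ofReal (2 * a / π)
          * ∫⁻ s in Ioi a, F (s ^ 2) / ENNReal.ofReal (s * Real.sqrt (s ^ 2 - a ^ 2)) := by
  simp_rw [lintegral_Ioi_div_mul_sqrt_sq_sub_sq ha, hF]
  rw [lintegral_laplace_div_swap hf hf0 (by fun_prop) (by fun_prop),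
    ← lintegral_const_mul' _ _ ENNReal.ofReal_ne_top]
  refine setLIntegral_congr_fun measurableSet_Ioi fun t ht => ?_
  rw [lintegral_exp_div_eq_erfc ha (le_of_lt ht), ← ENNReal.ofReal_mul (hf0 t),
    ← ENNReal.ofReal_mul (by positivity)]
  congr 1
  field_simp
end

section
/- For all real r > -1 and a > 0, ∫₀^∞ t^r · erfc(a√t) dt = (2a · Γ(r+1) / π) · ∫_a^∞ ds / (s^{2r+3} √(s² − a²)). -/
open Real MeasureTheory Set

/-!
Writing `erfc x` as the Gaussian tail `(2/√π) ∫_{u>x} e^{-u²} du` and exchanging the order of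
integration (Tonelli) turns `∫_{x>0} x^q erfc x dx` into a Gaussian moment, which is a Gamma value;
the substitution `t = (x/a)²` reduces the left-hand side to this, giving
`Γ(r + 3/2) / ((r + 1) √π a^(2r+2))`. The substitution `s = a / √x` turns the right-hand integral
into the Beta integral `B(r + 3/2, 1/2) / (2 a^(2r+3))`. The two sides then agree by
`Γ(1/2) = √π` and `Γ(r + 2) = (r + 1) Γ(r + 1)`.
-/

open scoped ENNReal

theorem lintegral_Ioi_mul_lintegral_Ioi_swap (a : ℝ) {F G : ℝ → ℝ≥0∞} (hF : Measurable F)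
    (hG : Measurable G) :
    ∫⁻ x in Ioi a, F x * ∫⁻ u in Ioi x, G u = ∫⁻ u in Ioi a, G u * ∫⁻ x in Ioo a u, F x := by
  have hmeas :
      Measurable (Function.uncurry fun x u => (Ioi x).indicator (fun u => F x * G u) u) :=
    ((hF.comp measurable_fst).mul (hG.comp measurable_snd)).indicator
      (measurableSet_lt measurable_fst measurable_snd)
  calc ∫⁻ x in Ioi a, F x * ∫⁻ u in Ioi x, G u
      = ∫⁻ x in Ioi a, ∫⁻ u, (Ioi x).indicator (fun u => F x * G u) u := by
        refine lintegral_congr fun x => ?_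
        rw [lintegral_indicator measurableSet_Ioi, lintegral_const_mul _ hG]
    _ = ∫⁻ u, ∫⁻ x in Ioi a, (Ioi x).indicator (fun u => F x * G u) u :=
        lintegral_lintegral_swap hmeas.aemeasurable
    _ = ∫⁻ u, (Ioi a).indicator (fun u => G u * ∫⁻ x in Ioo a u, F x) u := by
        refine lintegral_congr fun u => ?_
        have : ∀ x, (Ioi x).indicator (fun u => F x * G u) u
            = (Iio u).indicator (fun x => F x * G u) x := fun x => by
          by_cases h : x < u <;> simp [h]
        simp_rw [this]
        rw [lintegral_indicator measurableSet_Iio, Measure.restrict_restrict measurableSet_Iio,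
          Iio_inter_Ioi, lintegral_mul_const _ hF, mul_comm]
        by_cases h : a < u <;> simp [h]
    _ = ∫⁻ u in Ioi a, G u * ∫⁻ x in Ioo a u, F x := lintegral_indicator measurableSet_Ioi _

theorem stronglyMeasurable_setIntegral_Ioi {g : ℝ → ℝ} (hg : Measurable g) :
    StronglyMeasurable fun x => ∫ u in Ioi x, g u := by
  simp_rw [← integral_indicator measurableSet_Ioi]
  exact StronglyMeasurable.integral_prod_right (f := fun x u => (Ioi x).indicator g u)
    ((hg.comp measurable_snd).indicator
      (measurableSet_lt measurable_fst measurable_snd)).stronglyMeasurable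

theorem stronglyMeasurable_setIntegral_Ioo (a : ℝ) {f : ℝ → ℝ} (hf : Measurable f) :
    StronglyMeasurable fun u => ∫ x in Ioo a u, f x := by
  simp_rw [← integral_indicator measurableSet_Ioo]
  exact StronglyMeasurable.integral_prod_right (f := fun u x => (Ioo a u).indicator f x)
    ((hf.comp measurable_snd).indicator ((measurableSet_lt measurable_const measurable_snd).inter
      (measurableSet_lt measurable_snd measurable_fst))).stronglyMeasurable

theorem integral_Ioi_mul_integral_Ioi_swap {a : ℝ} {f g : ℝ → ℝ} (hf : Measurable f)
    (hg : Measurable g) (hf₀ : ∀ x ∈ Ioi a, 0 ≤ f x) (hg₀ : ∀ u ∈ Ioi a, 0 ≤ g u)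
    (hfi : ∀ u, IntegrableOn f (Ioo a u)) (hgi : IntegrableOn g (Ioi a)) :
    ∫ x in Ioi a, f x * ∫ u in Ioi x, g u = ∫ u in Ioi a, g u * ∫ x in Ioo a u, f x := by
  have hg₀' : ∀ x ∈ Ioi a, 0 ≤ᵐ[volume.restrict (Ioi x)] g := fun x hx =>
    (ae_restrict_iff' measurableSet_Ioi).2 <| .of_forall fun u hu =>
      hg₀ u (mem_Ioi.2 (lt_trans hx hu))
  have hf₀' : ∀ u, 0 ≤ᵐ[volume.restrict (Ioo a u)] f := fun u =>
    (ae_restrict_iff' measurableSet_Ioo).2 <| .of_forall fun x hx => hf₀ x hx.1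
  rw [integral_eq_lintegral_of_nonneg_ae, integral_eq_lintegral_of_nonneg_ae]
  · congr 1
    calc ∫⁻ x in Ioi a, ENNReal.ofReal (f x * ∫ u in Ioi x, g u)
        = ∫⁻ x in Ioi a, ENNReal.ofReal (f x) * ∫⁻ u in Ioi x, ENNReal.ofReal (g u) := by
          refine setLIntegral_congr_fun measurableSet_Ioi fun x hx => ?_
          rw [ENNReal.ofReal_mul (hf₀ x hx), ofReal_integral_eq_lintegral_ofReal
            (hgi.mono_set (Ioi_subset_Ioi (mem_Ioi.1 hx).le)) (hg₀' x hx)]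
      _ = ∫⁻ u in Ioi a, ENNReal.ofReal (g u) * ∫⁻ x in Ioo a u, ENNReal.ofReal (f x) :=
          lintegral_Ioi_mul_lintegral_Ioi_swap a hf.ennreal_ofReal hg.ennreal_ofReal
      _ = ∫⁻ u in Ioi a, ENNReal.ofReal (g u * ∫ x in Ioo a u, f x) := by
          refine setLIntegral_congr_fun measurableSet_Ioi fun u hu => ?_
          rw [ENNReal.ofReal_mul (hg₀ u hu),
            ofReal_integral_eq_lintegral_ofReal (hfi u) (hf₀' u)]
  · exact (ae_restrict_iff' measurableSet_Ioi).2 <| .of_forall fun u hu =>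
      mul_nonneg (hg₀ u hu) (integral_nonneg_of_ae (hf₀' u))
  · exact (hg.stronglyMeasurable.mul
      (stronglyMeasurable_setIntegral_Ioo a hf)).aestronglyMeasurable
  · exact (ae_restrict_iff' measurableSet_Ioi).2 <| .of_forall fun x hx =>
      mul_nonneg (hf₀ x hx) (integral_nonneg_of_ae (hg₀' x hx))
  · exact (hf.stronglyMeasurable.mul
      (stronglyMeasurable_setIntegral_Ioi hg)).aestronglyMeasurable

theorem integrableOn_exp_neg_sq (s : Set ℝ) : IntegrableOn (fun u : ℝ => exp (-u ^ 2)) s := by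
  simpa using (integrable_exp_neg_mul_sq one_pos).integrableOn

theorem erfc_eq_integral_Ioi (x : ℝ) : erfc x = 2 / √π * ∫ u in Ioi x, exp (-u ^ 2) := by
  have hgauss : ∫ u in Ioi (0 : ℝ), exp (-u ^ 2) = √π / 2 := by
    simpa using integral_gaussian_Ioi 1
  rw [erfc, erf, ← intervalIntegral.integral_Ioi_sub_Ioi' (integrableOn_exp_neg_sq _)
    (integrableOn_exp_neg_sq _), hgauss]
  field_simp
  ring

theorem integral_Ioo_rpow {q u : ℝ} (hq : -1 < q) (hu : 0 ≤ u) :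
    ∫ x in Ioo 0 u, x ^ q = u ^ (q + 1) / (q + 1) := by
  rw [← integral_Ioc_eq_integral_Ioo, ← intervalIntegral.integral_of_le hu,
    integral_rpow (Or.inl hq), zero_rpow (by linarith), sub_zero]

theorem integral_rpow_mul_exp_neg_sq {q : ℝ} (hq : -1 < q) :
    ∫ u in Ioi 0, u ^ q * exp (-u ^ 2) = Gamma ((q + 1) / 2) / 2 := by
  simpa [rpow_two, div_eq_inv_mul] using integral_rpow_mul_exp_neg_rpow two_pos hq

theorem integral_rpow_mul_erfc {q : ℝ} (hq : -1 < q) :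
    ∫ x in Ioi 0, x ^ q * erfc x = Gamma ((q + 2) / 2) / ((q + 1) * √π) := by
  calc ∫ x in Ioi 0, x ^ q * erfc x
      = 2 / √π * ∫ x in Ioi 0, x ^ q * ∫ u in Ioi x, exp (-u ^ 2) := by
        rw [← integral_const_mul]
        congr 1 with x
        rw [erfc_eq_integral_Ioi]
        ring
    _ = 2 / √π * ∫ u in Ioi 0, exp (-u ^ 2) * ∫ x in Ioo 0 u, x ^ q := by
        rw [integral_Ioi_mul_integral_Ioi_swap (by fun_prop) (by fun_prop)
          (fun x hx => rpow_nonneg (mem_Ioi.1 hx).le q) (fun u _ => (exp_pos _).le)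
          (fun u => (intervalIntegral.intervalIntegrable_rpow' hq).1.mono_set Ioo_subset_Ioc_self)
          (integrableOn_exp_neg_sq _)]
    _ = 2 / √π * ((q + 1)⁻¹ * ∫ u in Ioi 0, u ^ (q + 1) * exp (-u ^ 2)) := by
        congr 1
        rw [← integral_const_mul]
        refine setIntegral_congr_fun measurableSet_Ioi fun u hu => ?_
        rw [integral_Ioo_rpow hq (le_of_lt hu)]
        ring
    _ = Gamma ((q + 2) / 2) / ((q + 1) * √π) := by
        rw [integral_rpow_mul_exp_neg_sq (by linarith), show q + 1 + 1 = q + 2 by ring]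
        field_simp

theorem integral_rpow_mul_erfc_mul_sqrt {r a : ℝ} (hr : -1 < r) (ha : 0 < a) :
    ∫ t in Ioi 0, t ^ r * erfc (a * √t)
      = Gamma (r + 3 / 2) / ((r + 1) * √π * a ^ (2 * r + 2)) := by
  calc ∫ t in Ioi 0, t ^ r * erfc (a * √t)
      = ∫ x in Ioi 0,
          (2 * x ^ ((2 : ℝ) - 1)) • ((x ^ (2 : ℝ)) ^ r * erfc (a * √(x ^ (2 : ℝ)))) :=
        (integral_comp_rpow_Ioi_of_pos two_pos).symm
    _ = ∫ x in Ioi 0, 2 / a ^ (2 * r + 1) * ((a * x) ^ (2 * r + 1) * erfc (a * x)) := by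
        refine setIntegral_congr_fun measurableSet_Ioi fun x (hx : 0 < x) => ?_
        rw [smul_eq_mul, ← rpow_mul hx.le, rpow_two, sqrt_sq hx.le, mul_rpow ha.le hx.le,
          show (2 : ℝ) - 1 = 1 by norm_num, rpow_one, rpow_add hx, rpow_one]
        field_simp
    _ = 2 / a ^ (2 * r + 1) * (a⁻¹ * ∫ y in Ioi 0, y ^ (2 * r + 1) * erfc y) := by
        rw [integral_const_mul, integral_comp_mul_left_Ioi (fun y => y ^ (2 * r + 1) * erfc y) 0 ha,
          mul_zero, smul_eq_mul]
    _ = Gamma (r + 3 / 2) / ((r + 1) * √π * a ^ (2 * r + 2)) := by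
        have hpow : a ^ (2 * r + 2) = a ^ (2 * r + 1) * a := by
          rw [← rpow_add_one ha.ne']
          ring_nf
        rw [integral_rpow_mul_erfc (by linarith), hpow,
          show (2 * r + 1 + 2) / 2 = r + 3 / 2 by ring, show 2 * r + 1 + 1 = 2 * (r + 1) by ring]
        field_simp

theorem integral_rpow_mul_one_sub_rpow {u v : ℝ} (hu : 0 < u) (hv : 0 < v) :
    ∫ x in (0 : ℝ)..1, x ^ (u - 1) * (1 - x) ^ (v - 1) = Gamma u * Gamma v / Gamma (u + v) := by
  have hbeta := Complex.betaIntegral_eq_Gamma_mul_div u v (by simpa) (by simpa)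
  have hreal : Complex.betaIntegral u v
      = ((∫ x in (0 : ℝ)..1, x ^ (u - 1) * (1 - x) ^ (v - 1) : ℝ) : ℂ) := by
    rw [Complex.betaIntegral, ← intervalIntegral.integral_ofReal]
    refine intervalIntegral.integral_congr fun x hx => ?_
    rw [uIcc_of_le zero_le_one] at hx
    push_cast
    rw [Complex.ofReal_cpow hx.1, Complex.ofReal_cpow (sub_nonneg.2 hx.2)]
    push_cast
    ring
  rw [hreal, ← Complex.ofReal_add, Complex.Gamma_ofReal, Complex.Gamma_ofReal,
    Complex.Gamma_ofReal] at hbeta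
  exact_mod_cast hbeta

theorem image_div_sqrt_Ioo {a : ℝ} (ha : 0 < a) : (fun x => a / √x) '' Ioo 0 1 = Ioi a := by
  ext s
  constructor
  · rintro ⟨x, ⟨hx₀, hx₁⟩, rfl⟩
    have hsqrt : √x < 1 := (sqrt_lt' one_pos).2 (by simpa using hx₁)
    exact (lt_div_iff₀ (sqrt_pos.2 hx₀)).2 (by nlinarith)
  · intro (hs : a < s)
    have hs₀ : 0 < s := ha.trans hs
    refine ⟨(a / s) ^ 2, ⟨by positivity, ?_⟩, ?_⟩
    · have : a / s < 1 := (div_lt_one hs₀).2 hs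
      nlinarith [div_pos ha hs₀]
    · simp only
      rw [sqrt_sq (div_pos ha hs₀).le]
      field_simp

/-- The Jacobian of the substitution `s = a / √x` turns the integrand into a Beta density. -/
theorem abs_deriv_div_sqrt_mul_eq {p a x : ℝ} (ha : 0 < a) (hx : x ∈ Ioo (0 : ℝ) 1) :
    |a * (-(1 / (2 * √x)) / √x ^ 2)| * (1 / ((a / √x) ^ p * √((a / √x) ^ 2 - a ^ 2)))
      = 1 / (2 * a ^ p) * (x ^ (p / 2 - 1) * (1 - x) ^ ((1 : ℝ) / 2 - 1)) := by
  obtain ⟨hx₀, hx₁⟩ := hx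
  set q := √x
  have hq₀ : 0 < q := sqrt_pos.2 hx₀
  have hqx : q ^ 2 = x := sq_sqrt hx₀.le
  have hsub : (1 - x) ^ ((1 : ℝ) / 2 - 1) = (√(1 - x))⁻¹ := by
    rw [show (1 : ℝ) / 2 - 1 = -(1 / 2) by norm_num, rpow_neg (by linarith), ← sqrt_eq_rpow]
  have hsqrt : √((a / q) ^ 2 - a ^ 2) = a * √(1 - x) / q := by
    rw [sqrt_eq_iff_mul_self_eq_of_pos (by have := sqrt_pos.2 (sub_pos.2 hx₁); positivity)]
    field_simp
    rw [sq_sqrt (by linarith)]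
    nlinarith
  have hx_pow : x ^ (p / 2 - 1) = q ^ (p - 2) := by
    rw [← hqx, ← rpow_natCast, ← rpow_mul hq₀.le]
    ring_nf
  have hq_pow : q ^ p = q ^ (p - 2) * q ^ 2 := by
    rw [← rpow_natCast, ← rpow_add hq₀]
    norm_num
  have hderiv : a * (-(1 / (2 * q)) / q ^ 2) = -(a / (2 * q ^ 3)) := by
    field_simp
  rw [hderiv, abs_neg, abs_of_pos (by positivity), div_rpow ha.le hq₀.le, hsqrt, hx_pow, hsub,
    hq_pow]
  field_simp

theorem integral_Ioi_one_div_rpow_mul_sqrt_sq_sub_sq {p a : ℝ} (hp : 0 < p) (ha : 0 < a) :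
    ∫ s in Ioi a, 1 / (s ^ p * √(s ^ 2 - a ^ 2))
      = √π * Gamma (p / 2) / (2 * a ^ p * Gamma ((p + 1) / 2)) := by
  have hderiv : ∀ x ∈ Ioo (0 : ℝ) 1, HasDerivWithinAt (fun x => a / √x)
      (a * (-(1 / (2 * √x)) / √x ^ 2)) (Ioo 0 1) x := fun x hx =>
    (((hasDerivAt_sqrt hx.1.ne').inv (sqrt_ne_zero'.2 hx.1)).const_mul a).hasDerivWithinAt
  have hinj : InjOn (fun x => a / √x) (Ioo 0 1) := fun x hx y hy hxy =>
    (sqrt_inj hx.1.le hy.1.le).1 (inv_injective (mul_left_cancel₀ ha.ne' hxy))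
  rw [← image_div_sqrt_Ioo ha,
    integral_image_eq_integral_abs_deriv_smul measurableSet_Ioo hderiv hinj]
  simp_rw [smul_eq_mul]
  rw [setIntegral_congr_fun measurableSet_Ioo fun x hx => abs_deriv_div_sqrt_mul_eq ha hx,
    integral_const_mul, ← integral_Ioc_eq_integral_Ioo,
    ← intervalIntegral.integral_of_le zero_le_one,
    integral_rpow_mul_one_sub_rpow (half_pos hp) one_half_pos, Gamma_one_half_eq,
    show p / 2 + 1 / 2 = (p + 1) / 2 by ring]
  field_simp

theorem stmt_13 (r a : ℝ) (hr : -1 < r) (ha : 0 < a) :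
    ∫ t in Ioi (0:ℝ), t ^ r * erfc (a * Real.sqrt t)
      = (2 * a * Real.Gamma (r + 1) / π)
          * ∫ s in Ioi a, 1 / (s ^ (2 * r + 3) * Real.sqrt (s ^ 2 - a ^ 2)) := by
  rw [integral_rpow_mul_erfc_mul_sqrt hr ha,
    integral_Ioi_one_div_rpow_mul_sqrt_sq_sub_sq (by linarith) ha,
    show (2 * r + 3 + 1) / 2 = r + 1 + 1 by ring, Gamma_add_one (s := r + 1) (by linarith),
    show (2 * r + 3) / 2 = r + 3 / 2 by ring, show 2 * r + 3 = 2 * r + 2 + 1 by ring,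
    rpow_add_one ha.ne']
  have hr₁ : 0 < r + 1 := by linarith
  field_simp
  rw [sq_sqrt pi_pos.le]
end

section
/- Let a > 0 and let f : (0,∞) → [0,∞) be measurable, with Laplace transform F(s) = ∫₀^∞ f(t) e^{-s t} dt (valued in [0,∞]). Then, as an identity in [0,∞], ∫₀^∞ e^{a² t} f(t) · erfc(a√t) dt = (2/π) ∫₀^{π/2} F(a² tan²θ) dθ = (2a/π) ∫₀^∞ F(s²) / (s² + a²) ds. -/
open Real MeasureTheory Set

/-!
After the substitution `u = tan θ`, the kernel identity
`∫₀^{π/2} exp (-c tan² θ) dθ = (π/2) e^c erfc √c` (for `c ≥ 0`) follows by writing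
`1 / (1 + u²) = ∫₀^∞ e^{-(1+u²) v} dv`, swapping the integrals, evaluating the Gaussian integral in
`u`, and substituting `v = w² - c`, which leaves the Gaussian tail `∫_{√c}^∞ e^{-w²} dw`.
Applied with `c = a² t`, the kernel identity writes `e^{a² t} erfc (a √t)` as an integral of
`exp (-a² tan² θ · t)`; multiplying by `f t`, integrating in `t` and using Tonelli turns the inner
integral into `F (a² tan² θ)`. The second form is the substitution `s = a tan θ`.
-/

open scoped ENNReal

theorem integrable_exp_neg_sq : Integrable fun w : ℝ => exp (-w ^ 2) := by
  simpa using integrable_exp_neg_mul_sq one_pos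

theorem integral_Ioi_exp_neg_sq (x : ℝ) :
    ∫ w in Ioi x, exp (-w ^ 2) = √π / 2 * erfc x := by
  have hhalf : ∫ w in Ioi (0 : ℝ), exp (-w ^ 2) = √π / 2 := by
    simpa using integral_gaussian_Ioi 1
  have hsplit := intervalIntegral.integral_Ioi_sub_Ioi'
    integrable_exp_neg_sq.integrableOn integrable_exp_neg_sq.integrableOn (a := 0) (b := x)
  have hπ : 0 < √π := sqrt_pos.2 pi_pos
  rw [erfc, erf]
  field_simp
  linarith

theorem ofReal_div_eq_lintegral_exp {x b : ℝ} (hx : 0 ≤ x) (hb : 0 < b) :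
    ENNReal.ofReal (x / b) = ∫⁻ v in Ioi 0, ENNReal.ofReal (x * exp (-b * v)) := by
  rw [← ofReal_integral_eq_lintegral_ofReal ((exp_neg_integrableOn_Ioi 0 hb).const_mul x)
      (ae_of_all _ fun v => by positivity),
    integral_const_mul, integral_exp_mul_Ioi (neg_neg_of_pos hb)]
  simp [div_eq_mul_inv]

theorem lintegral_Ioi_mul_exp_neg_mul_sq {x b : ℝ} (hx : 0 ≤ x) (hb : 0 < b) :
    ∫⁻ u in Ioi 0, ENNReal.ofReal (x * exp (-b * u ^ 2))
      = ENNReal.ofReal (x * (√(π / b) / 2)) := by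
  rw [← ofReal_integral_eq_lintegral_ofReal
      ((integrable_exp_neg_mul_sq hb).integrableOn.const_mul x)
      (ae_of_all _ fun u => by positivity),
    integral_const_mul, integral_gaussian_Ioi]

theorem image_arctan_div_Ioi {a : ℝ} (ha : 0 < a) :
    (fun s => arctan (s / a)) '' Ioi 0 = Ioo 0 (π / 2) := by
  ext θ
  constructor
  · rintro ⟨s, hs, rfl⟩
    exact ⟨arctan_pos.2 (div_pos hs ha), arctan_lt_pi_div_two _⟩
  · rintro ⟨h0, h1⟩
    refine ⟨a * tan θ, mul_pos ha (tan_pos_of_pos_of_lt_pi_div_two h0 h1), ?_⟩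
    simp only [mul_div_cancel_left₀ _ ha.ne', arctan_tan (by linarith [pi_pos]) h1]

theorem lintegral_Ioo_comp_mul_tan {a : ℝ} (ha : 0 < a) (g : ℝ → ℝ≥0∞) :
    ∫⁻ θ in Ioo 0 (π / 2), g (a * tan θ)
      = ∫⁻ s in Ioi 0, ENNReal.ofReal (a / (s ^ 2 + a ^ 2)) * g s := by
  have hderiv : ∀ s ∈ Ioi (0 : ℝ), HasDerivWithinAt (fun s => arctan (s / a))
      (a / (s ^ 2 + a ^ 2)) (Ioi 0) s := fun s _ => by
    refine ((hasDerivAt_id' s).div_const a).arctan.hasDerivWithinAt.congr_deriv ?_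
    field_simp
    ring
  have hinj : InjOn (fun s => arctan (s / a)) (Ioi 0) :=
    (arctan_strictMono.comp (strictMono_div_right_of_pos ha)).injective.injOn
  rw [← image_arctan_div_Ioi ha,
    lintegral_image_eq_lintegral_abs_deriv_mul measurableSet_Ioi hderiv hinj]
  refine setLIntegral_congr_fun measurableSet_Ioi fun s _ => ?_
  have hpos : 0 < a / (s ^ 2 + a ^ 2) := by positivity
  rw [abs_of_pos hpos, tan_arctan, mul_div_cancel₀ _ ha.ne']

theorem lintegral_Ioi_comp_sq_sub {c : ℝ} (hc : 0 ≤ c) (g : ℝ → ℝ≥0∞) :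
    ∫⁻ v in Ioi 0, g v = ∫⁻ w in Ioi √c, ENNReal.ofReal (2 * w) * g (w ^ 2 - c) := by
  have himage : (fun w => w ^ 2 - c) '' Ioi √c = Ioi 0 := by
    ext v
    constructor
    · rintro ⟨w, hw, rfl⟩
      have := pow_lt_pow_left₀ (mem_Ioi.1 hw) (sqrt_nonneg c) two_ne_zero
      rw [sq_sqrt hc] at this
      exact sub_pos.2 this
    · intro hv
      refine ⟨√(c + v), sqrt_lt_sqrt hc (by linarith [mem_Ioi.1 hv]), ?_⟩
      simp only
      rw [sq_sqrt (by linarith [mem_Ioi.1 hv])]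
      ring
  have hinj : InjOn (fun w => w ^ 2 - c) (Ioi √c) := fun x hx y hy hxy => by
    have hx0 := (sqrt_nonneg c).trans (le_of_lt hx)
    have hy0 := (sqrt_nonneg c).trans (le_of_lt hy)
    exact (pow_left_inj₀ hx0 hy0 two_ne_zero).1 (sub_left_injective hxy)
  rw [← himage, lintegral_image_eq_lintegral_abs_deriv_mul measurableSet_Ioi
    (fun w _ => by simpa using ((hasDerivAt_pow 2 w).sub_const c).hasDerivWithinAt) hinj]
  refine setLIntegral_congr_fun measurableSet_Ioi fun w hw => ?_
  rw [abs_of_nonneg (by linarith [(sqrt_nonneg c).trans (le_of_lt hw)])]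

theorem lintegral_exp_neg_mul_tan_sq {c : ℝ} (hc : 0 ≤ c) :
    ∫⁻ θ in Ioo 0 (π / 2), ENNReal.ofReal (exp (-(c * tan θ ^ 2)))
      = ENNReal.ofReal (π / 2 * (exp c * erfc √c)) := by
  calc _ = ∫⁻ u in Ioi 0,
          ENNReal.ofReal (1 / (u ^ 2 + 1)) * ENNReal.ofReal (exp (-(c * u ^ 2))) := by
        simpa only [one_mul, one_pow] using
          lintegral_Ioo_comp_mul_tan one_pos fun u => ENNReal.ofReal (exp (-(c * u ^ 2)))
    _ = ∫⁻ u in Ioi 0, ∫⁻ v in Ioi 0, ENNReal.ofReal (exp (-v) * exp (-(c + v) * u ^ 2)) := by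
        refine lintegral_congr fun u => ?_
        rw [← ENNReal.ofReal_mul (by positivity), one_div_mul_eq_div,
          ofReal_div_eq_lintegral_exp (exp_pos _).le (by positivity)]
        congr with v
        rw [← exp_add, ← exp_add]
        ring_nf
    _ = ∫⁻ v in Ioi 0, ∫⁻ u in Ioi 0, ENNReal.ofReal (exp (-v) * exp (-(c + v) * u ^ 2)) :=
        lintegral_lintegral_swap (by fun_prop)
    _ = ∫⁻ v in Ioi 0, ENNReal.ofReal (exp (-v) * (√(π / (c + v)) / 2)) :=
        setLIntegral_congr_fun measurableSet_Ioi fun v hv =>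
          lintegral_Ioi_mul_exp_neg_mul_sq (exp_pos _).le (by linarith [mem_Ioi.1 hv])
    _ = ∫⁻ w in Ioi √c, ENNReal.ofReal (√π * exp c * exp (-w ^ 2)) := by
        rw [lintegral_Ioi_comp_sq_sub hc]
        refine setLIntegral_congr_fun measurableSet_Ioi fun w hw => ?_
        have hw0 : 0 < w := (sqrt_nonneg c).trans_lt hw
        rw [← ENNReal.ofReal_mul (by positivity), add_sub_cancel, sqrt_div pi_pos.le,
          sqrt_sq hw0.le, neg_sub, sub_eq_add_neg, exp_add]
        congr 1
        field_simp
    _ = _ := by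
        rw [← ofReal_integral_eq_lintegral_ofReal
            (integrable_exp_neg_sq.integrableOn.const_mul _) (ae_of_all _ fun w => by positivity),
          integral_const_mul, integral_Ioi_exp_neg_sq]
        have hπ : √π ^ 2 = π := sq_sqrt pi_pos.le
        congr 1
        linear_combination exp c * erfc √c / 2 * hπ

theorem ofReal_exp_mul_mul_erfc_sqrt {c y : ℝ} (hc : 0 ≤ c) (hy : 0 ≤ y) :
    ENNReal.ofReal (exp c * y * erfc √c) = ENNReal.ofReal (2 / π)
      * ∫⁻ θ in Ioo 0 (π / 2), ENNReal.ofReal (y * exp (-(c * tan θ ^ 2))) := by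
  simp_rw [ENNReal.ofReal_mul hy]
  rw [lintegral_const_mul' _ _ ENNReal.ofReal_ne_top, lintegral_exp_neg_mul_tan_sq hc,
    ← ENNReal.ofReal_mul hy, ← ENNReal.ofReal_mul (by positivity)]
  congr 1
  field_simp

theorem stmt_15 (a : ℝ) (ha : 0 < a) (f : ℝ → ℝ) (hf : Measurable f)
    (hf0 : ∀ t, 0 ≤ f t) (F : ℝ → ENNReal)
    (hF : ∀ s : ℝ, F s = ∫⁻ t in Ioi (0:ℝ), ENNReal.ofReal (f t * Real.exp (-s * t))) :
    (∫⁻ t in Ioi (0:ℝ), ENNReal.ofReal (Real.exp (a ^ 2 * t) * f t * erfc (a * Real.sqrt t)))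
      = ENNReal.ofReal (2 / π) * ∫⁻ θ in Ioo (0:ℝ) (π / 2), F (a ^ 2 * Real.tan θ ^ 2)
    ∧ (∫⁻ t in Ioi (0:ℝ), ENNReal.ofReal (Real.exp (a ^ 2 * t) * f t * erfc (a * Real.sqrt t)))
      = ENNReal.ofReal (2 * a / π)
          * ∫⁻ s in Ioi (0:ℝ), F (s ^ 2) / ENNReal.ofReal (s ^ 2 + a ^ 2) := by
  have htan : Measurable tan := by
    rw [show tan = fun x => sin x / cos x from funext tan_eq_sin_div_cos]
    fun_prop
  have hθ : ∫⁻ t in Ioi 0, ENNReal.ofReal (exp (a ^ 2 * t) * f t * erfc (a * √t))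
      = ENNReal.ofReal (2 / π) * ∫⁻ θ in Ioo 0 (π / 2), F (a ^ 2 * tan θ ^ 2) := by
    calc _ = ∫⁻ t in Ioi 0, ENNReal.ofReal (2 / π)
          * ∫⁻ θ in Ioo 0 (π / 2), ENNReal.ofReal (f t * exp (-(a ^ 2 * tan θ ^ 2) * t)) :=
          setLIntegral_congr_fun measurableSet_Ioi fun t ht => by
            have hsqrt : a * √t = √(a ^ 2 * t) := by rw [sqrt_mul (sq_nonneg a), sqrt_sq ha.le]
            rw [hsqrt, ofReal_exp_mul_mul_erfc_sqrt (mul_pos (pow_pos ha 2) ht).le (hf0 t)]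
            ring_nf
      _ = ENNReal.ofReal (2 / π) * ∫⁻ θ in Ioo 0 (π / 2), ∫⁻ t in Ioi 0,
          ENNReal.ofReal (f t * exp (-(a ^ 2 * tan θ ^ 2) * t)) := by
        rw [lintegral_const_mul' _ _ ENNReal.ofReal_ne_top, lintegral_lintegral_swap (by fun_prop)]
      _ = _ := by simp_rw [hF]
  refine ⟨hθ, hθ.trans ?_⟩
  have hsubst := lintegral_Ioo_comp_mul_tan ha fun s => F (s ^ 2)
  simp only [mul_pow] at hsubst
  rw [hsubst, show 2 * a / π = 2 / π * a by ring, ENNReal.ofReal_mul (by positivity), mul_assoc,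
    ← lintegral_const_mul' (ENNReal.ofReal a) _ ENNReal.ofReal_ne_top]
  refine congrArg _ (lintegral_congr fun s => ?_)
  rw [ENNReal.ofReal_div_of_pos (by positivity), div_eq_mul_inv, div_eq_mul_inv]
  ring
end
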